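/- Let α ∈ (0,1), c, σ, η > 0 and let f be bounded measurable with ‖f‖_∞ = f(0) ≥ 0. With ũ(λ,0) = σ/(c + ηλ^α + σ√λ) ∫₀^∞ e^{-y√λ}f(y)dy + λ^{α-1} ηf(0)/(c + ηλ^α + σ√λ), we have for all λ ≥ 0: λũ(λ,0) - f(0) ≤ -f(0) · c/(c + ηλ^α + σ√λ), and also |λũ(λ,0) - f(0)| ≤ ‖f‖_∞ √((c/η)λ^{-α} + (σ/η)λ^{1/2-α}) for λ > 0. -/

import Mathlib

/-!
Put `s = √λ`, `a = c + σ s`, `b = η λ^α` and `I = ∫₀^∞ e^{-ys} f(y) dy`, so that `|s I| ≤ f(0)`.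
For `λ > 0` one has `λ ũ(λ,0) - f(0) = (σ s (s I) - a f(0)) / (a + b)`. The numerator is at most
`-c f(0)`, which gives the first bound, and at most `2 a f(0)` in absolute value; the second
bound then follows from `a / (a + b) ≤ √(a / b) / 2`, i.e. from `a + b ≥ 2 √(a b)`.
-/

open MeasureTheory Real Set

theorem abs_integral_exp_neg_mul_le {g : ℝ → ℝ} {M s : ℝ} (hg : ∀ y ∈ Ioi (0 : ℝ), |g y| ≤ M)
    (hs : 0 < s) : |∫ y in Ioi (0 : ℝ), exp (-(y * s)) * g y| ≤ M / s := by
  have hint : Integrable (fun y : ℝ => exp (-(y * s)) * M) (volume.restrict (Ioi 0)) := by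
    simpa [neg_mul, mul_comm] using (exp_neg_integrableOn_Ioi 0 hs).mul_const M
  calc |∫ y in Ioi (0 : ℝ), exp (-(y * s)) * g y|
      ≤ ∫ y in Ioi (0 : ℝ), exp (-(y * s)) * M := by
        rw [← norm_eq_abs]
        refine norm_integral_le_of_norm_le hint ?_
        filter_upwards [ae_restrict_mem measurableSet_Ioi] with y hy
        rw [norm_mul, norm_of_nonneg (exp_pos _).le, norm_eq_abs]
        exact mul_le_mul_of_nonneg_left (hg y hy) (exp_pos _).le
    _ = M / s := by
        simp_rw [integral_mul_const, neg_mul_eq_mul_neg, mul_comm _ (-s)]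
        rw [integral_exp_mul_Ioi (neg_neg_of_pos hs)]
        field_simp
        simp

theorem div_add_le_sqrt_div_div_two {a b : ℝ} (ha : 0 ≤ a) (hb : 0 < b) :
    a / (a + b) ≤ √(a / b) / 2 := by
  set t := √(a / b)
  have hat : a = t ^ 2 * b := by
    rw [sq_sqrt (by positivity)]; field_simp
  rw [hat, div_le_iff₀ (by positivity)]
  nlinarith [mul_nonneg (mul_nonneg (sqrt_nonneg (a / b)) hb.le) (sq_nonneg (t - 1))]

theorem rpow_neg_add_rpow_half_sub_eq {lam : ℝ} (hlam : 0 < lam) (α c σ η : ℝ) :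
    (c / η) * lam ^ (-α) + (σ / η) * lam ^ ((1 : ℝ) / 2 - α) = (c + σ * √lam) / (η * lam ^ α) := by
  rw [sub_eq_add_neg, rpow_add hlam, rpow_neg hlam.le, ← sqrt_eq_rpow]
  field_simp

theorem mul_boundary_value_sub_eq {α c σ η lam I f₀ : ℝ} (hlam : 0 < lam)
    (hD : c + η * lam ^ α + σ * √lam ≠ 0) :
    lam * (σ / (c + η * lam ^ α + σ * √lam) * I
        + lam ^ (α - 1) * (η * f₀ / (c + η * lam ^ α + σ * √lam))) - f₀
      = (σ * √lam * (√lam * I) - (c + σ * √lam) * f₀) / (c + η * lam ^ α + σ * √lam) := by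
  have hpow : lam * lam ^ (α - 1) = lam ^ α := by
    rw [mul_comm, ← rpow_add_one hlam.ne']; ring_nf
  have hsq : √lam * √lam = lam := mul_self_sqrt hlam.le
  field_simp
  linear_combination (η * f₀) * hpow - σ * I * hsq

theorem stmt_19_general (α c σ η : ℝ) (hα : α ∈ Set.Ioo (0:ℝ) 1)
    (hc : 0 < c) (hσ : 0 < σ) (hη : 0 < η)
    (f : ℝ → ℝ)
    -- f is bounded with ‖f‖_∞ = f(0) ≥ 0:
    (hfb : ∀ y, |f y| ≤ f 0)
    (utld : ℝ → ℝ)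
    (hutld : ∀ lam : ℝ, 0 ≤ lam →
      utld lam = σ / (c + η * lam ^ α + σ * Real.sqrt lam) *
          (∫ y in Ioi (0:ℝ), Real.exp (-(y * Real.sqrt lam)) * f y)
        + lam ^ (α - 1) * (η * f 0 / (c + η * lam ^ α + σ * Real.sqrt lam))) :
    (∀ lam : ℝ, 0 ≤ lam →
      lam * utld lam - f 0 ≤ -(f 0) * (c / (c + η * lam ^ α + σ * Real.sqrt lam)))
    ∧ ∀ lam : ℝ, 0 < lam →
      |lam * utld lam - f 0|
        ≤ f 0 * Real.sqrt ((c/η) * lam ^ (-α) + (σ/η) * lam ^ ((1:ℝ)/2 - α)) := by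
  obtain ⟨hα0, -⟩ := hα
  have hf₀ : 0 ≤ f 0 := (abs_nonneg _).trans (hfb 0)
  have key : ∀ lam, 0 < lam → ∃ J, |J| ≤ f 0 ∧ lam * utld lam - f 0
      = (σ * √lam * J - (c + σ * √lam) * f 0) / (c + η * lam ^ α + σ * √lam) := by
    intro lam hlam
    have hs : 0 < √lam := sqrt_pos.2 hlam
    refine ⟨√lam * ∫ y in Ioi (0 : ℝ), exp (-(y * √lam)) * f y, ?_, ?_⟩
    · rw [abs_mul, abs_of_pos hs, ← le_div_iff₀' hs]
      exact abs_integral_exp_neg_mul_le (fun y _ => hfb y) hs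
    · rw [hutld lam hlam.le]
      exact mul_boundary_value_sub_eq hlam (by positivity)
  refine ⟨fun lam hlam => ?_, fun lam hlam => ?_⟩
  · rcases hlam.eq_or_lt with rfl | hlam
    · simp [hutld 0 le_rfl, zero_rpow hα0.ne', hc.ne']
    obtain ⟨J, hJ, heq⟩ := key lam hlam
    have hσs : 0 ≤ σ * √lam := by positivity
    rw [heq, ← mul_div_assoc]
    gcongr
    nlinarith [mul_le_mul_of_nonneg_left (le_abs_self J |>.trans hJ) hσs]
  · obtain ⟨J, hJ, heq⟩ := key lam hlam
    set a := c + σ * √lam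
    set b := η * lam ^ α
    have hσs : 0 ≤ σ * √lam := by positivity
    have ha : 0 < a := by positivity
    have hb : 0 < b := by positivity
    have hnum : |σ * √lam * J - a * f 0| ≤ 2 * a * f 0 := by
      have := mul_le_mul_of_nonneg_left (abs_le.1 hJ).1 hσs
      have := mul_le_mul_of_nonneg_left (abs_le.1 hJ).2 hσs
      rw [abs_le]; constructor <;> nlinarith
    rw [heq, rpow_neg_add_rpow_half_sub_eq hlam, show c + b + σ * √lam = a + b by ring, abs_div,
      abs_of_pos (add_pos ha hb)]
    calc |σ * √lam * J - a * f 0| / (a + b)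
        ≤ 2 * f 0 * (a / (a + b)) := by rw [mul_div_assoc']; gcongr; linarith
      _ ≤ 2 * f 0 * (√(a / b) / 2) := 
          mul_le_mul_of_nonneg_left (div_add_le_sqrt_div_div_two ha.le hb) (by positivity)
      _ = f 0 * √(a / b) := by ring

/-- Estimates for λũ(λ,0) - f(0) when ‖f‖_∞ = f(0) ≥ 0:
λũ(λ,0) - f(0) ≤ -f(0) c/(c+ηλ^α+σ√λ) for λ ≥ 0, and
|λũ(λ,0) - f(0)| ≤ ‖f‖_∞ √((c/η)λ^{-α} + (σ/η)λ^{1/2-α}) for λ > 0. -/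
theorem stmt_19 (α c σ η : ℝ) (hα : α ∈ Set.Ioo (0:ℝ) 1)
    (hc : 0 < c) (hσ : 0 < σ) (hη : 0 < η)
    (f : ℝ → ℝ) (hfm : Measurable f)
    -- f is bounded with ‖f‖_∞ = f(0) ≥ 0:
    (hfb : ∀ y, |f y| ≤ f 0)
    (utld : ℝ → ℝ)
    (hutld : ∀ lam : ℝ, 0 ≤ lam →
      utld lam = σ / (c + η * lam ^ α + σ * Real.sqrt lam) *
          (∫ y in Ioi (0:ℝ), Real.exp (-(y * Real.sqrt lam)) * f y)
        + lam ^ (α - 1) * (η * f 0 / (c + η * lam ^ α + σ * Real.sqrt lam))) :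
    (∀ lam : ℝ, 0 ≤ lam →
      lam * utld lam - f 0 ≤ -(f 0) * (c / (c + η * lam ^ α + σ * Real.sqrt lam)))
    ∧ ∀ lam : ℝ, 0 < lam →
      |lam * utld lam - f 0|
        ≤ f 0 * Real.sqrt ((c/η) * lam ^ (-α) + (σ/η) * lam ^ ((1:ℝ)/2 - α)) :=
  stmt_19_general α c σ η hα hc hσ hη f hfb utld hutld
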